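/- arXiv:2511.15410 — 3 statements merged into one kernel-verified Lean document; each statement's English description precedes it below -/
import Mathlib

section
/- Let C be a dagger category with a zero object satisfying (H4)(b): for every nonzero morphism u : I → A out of a dagger simple object I there exists an automorphism h of I with u ∘ h a dagger monomorphism. Then every nonzero morphism between dagger simple objects of C is an isomorphism. -/
universe v u

open CategoryTheory CategoryTheory.Limits

/-- A dagger structure on a category: an involutive contravariant
identity-on-objects endofunctor. -/
class DaggerStruct (C : Type u) [Category.{v} C] where
  dag : ∀ {A B : C}, (A ⟶ B) → (B ⟶ A)
  dag_id : ∀ (A : C), dag (𝟙 A) = 𝟙 A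
  dag_comp : ∀ {A B D : C} (f : A ⟶ B) (g : B ⟶ D), dag (f ≫ g) = dag g ≫ dag f
  dag_dag : ∀ {A B : C} (f : A ⟶ B), dag (dag f) = f

/-- `f` is a dagger monomorphism: `f† ∘ f = id`. -/
def IsDagMono {C : Type u} [Category.{v} C] [DaggerStruct C] {A B : C} (f : A ⟶ B) : Prop :=
  f ≫ DaggerStruct.dag f = 𝟙 A

/-- `I` is dagger simple: nonzero, and every nonzero dagger monomorphism into `I`
is a dagger isomorphism. -/
def DagSimple {C : Type u} [Category.{v} C] [HasZeroMorphisms C] [DaggerStruct C]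
    (I : C) : Prop :=
  ¬ IsZero I ∧ ∀ {A : C} (f : A ⟶ I), f ≠ 0 → IsDagMono f → DaggerStruct.dag f ≫ f = 𝟙 I

/-- In a dagger category with a zero object satisfying (H4)(b), every nonzero
morphism between dagger simple objects is an isomorphism. -/
theorem stmt_7 {C : Type u} [Category.{v} C] [HasZeroObject C] [HasZeroMorphisms C]
    [DaggerStruct C]
    (H4b : ∀ (I : C), DagSimple I → ∀ (A : C) (u : I ⟶ A), u ≠ 0 →
      ∃ h : I ⟶ I, IsIso h ∧ IsDagMono (h ≫ u))
    (I J : C) (hI : DagSimple I) (hJ : DagSimple J)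
    (u : I ⟶ J) (hu : u ≠ 0) :
    IsIso u := by
  obtain ⟨h, hh, hmono⟩ := H4b I hI J u hu
  have hne : h ≫ u ≠ 0 := by
    intro h0
    apply hu
    have : inv h ≫ (h ≫ u) = inv h ≫ 0 := by rw [h0]
    simpa using this
  have hepi := hJ.2 (h ≫ u) hne hmono
  have : IsIso (h ≫ u) :=
    ⟨DaggerStruct.dag (h ≫ u), hmono, hepi⟩
  have hu' : u = inv h ≫ (h ≫ u) := by simp
  rw [hu']
  infer_instance
end

section
/- Let C be a dagger category with a zero object satisfying axioms (H1)–(H4). Then the hom-monoid C(I,I) of endomorphisms of a dagger simple object I, with the biproduct-induced addition, zero morphism, composition, and identity, is a division ring, and the dagger restricts to an involutive antiautomorphism of it; i.e., C(I,I) is a ∗-division ring. -/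
universe v u

open CategoryTheory CategoryTheory.Limits

/-- The canonical semiadditive addition induced by binary biproducts:
`f + g = ∇ ∘ (f ⊕ g) ∘ Δ`. -/
noncomputable def daggerAdd {C : Type u} [Category.{v} C] [HasZeroMorphisms C] [HasBinaryBiproducts C]
    {X Y : C} (f g : X ⟶ Y) : X ⟶ Y :=
  biprod.lift (𝟙 X) (𝟙 X) ≫ biprod.map f g ≫ biprod.desc (𝟙 Y) (𝟙 Y)

section Helpers

variable {C : Type u} [Category.{v} C] [HasZeroMorphisms C] [HasBinaryBiproducts C]
  [DaggerStruct C]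

attribute [local instance]
  CategoryTheory.SemiadditiveOfBinaryBiproducts.addCommMonoidHomOfHasBinaryBiproducts

open SemiadditiveOfBinaryBiproducts

lemma daggerAdd_eq_add {X Y : C} (f g : X ⟶ Y) : daggerAdd f g = f + g := by
  rw [add_eq_right_addition]
  unfold daggerAdd
  congr 1
  apply biprod.hom_ext' <;> simp

lemma daggerAdd_assoc' {X Y : C} (f g h : X ⟶ Y) :
    daggerAdd (daggerAdd f g) h = daggerAdd f (daggerAdd g h) := by
  simp only [daggerAdd_eq_add]; exact add_assoc f g h

lemma daggerAdd_comm' {X Y : C} (f g : X ⟶ Y) : daggerAdd f g = daggerAdd g f := by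
  simp only [daggerAdd_eq_add]; exact add_comm f g

lemma daggerAdd_zero' {X Y : C} (f : X ⟶ Y) : daggerAdd f 0 = f := by
  rw [daggerAdd_eq_add]; exact add_zero f

lemma daggerAdd_comp' {X Y Z : C} (f g : X ⟶ Y) (h : Y ⟶ Z) :
    daggerAdd f g ≫ h = daggerAdd (f ≫ h) (g ≫ h) := by
  simp only [daggerAdd_eq_add]; exact add_comp f g h

lemma comp_daggerAdd' {X Y Z : C} (f : X ⟶ Y) (g h : Y ⟶ Z) :
    f ≫ daggerAdd g h = daggerAdd (f ≫ g) (f ≫ h) := by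
  simp only [daggerAdd_eq_add]; exact comp_add f g h

variable (hbip : ∀ X Y : C, DaggerStruct.dag (biprod.inl : X ⟶ X ⊞ Y) = biprod.fst ∧
    DaggerStruct.dag (biprod.inr : Y ⟶ X ⊞ Y) = biprod.snd)

include hbip

lemma dag_fst' (X Y : C) : DaggerStruct.dag (biprod.fst : X ⊞ Y ⟶ X) = biprod.inl := by
  rw [← (hbip X Y).1, DaggerStruct.dag_dag]

lemma dag_snd' (X Y : C) : DaggerStruct.dag (biprod.snd : X ⊞ Y ⟶ Y) = biprod.inr := by
  rw [← (hbip X Y).2, DaggerStruct.dag_dag]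

lemma dag_zero' (A B : C) : DaggerStruct.dag (0 : A ⟶ B) = 0 := by
  have h : (0 : A ⟶ B) = (biprod.inl : A ⟶ A ⊞ B) ≫ biprod.snd := by simp
  rw [h, DaggerStruct.dag_comp, dag_snd' hbip, (hbip A B).1]
  simp

lemma dag_lift' {Z X Y : C} (u : Z ⟶ X) (v : Z ⟶ Y) :
    DaggerStruct.dag (biprod.lift u v) = biprod.desc (DaggerStruct.dag u) (DaggerStruct.dag v) := by
  apply biprod.hom_ext'
  · simp only [biprod.inl_desc]
    rw [← dag_fst' hbip X Y, ← DaggerStruct.dag_comp, biprod.lift_fst]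
  · simp only [biprod.inr_desc]
    rw [← dag_snd' hbip X Y, ← DaggerStruct.dag_comp, biprod.lift_snd]

lemma dag_desc' {Z X Y : C} (u : X ⟶ Z) (v : Y ⟶ Z) :
    DaggerStruct.dag (biprod.desc u v) = biprod.lift (DaggerStruct.dag u) (DaggerStruct.dag v) := by
  apply biprod.hom_ext
  · simp only [biprod.lift_fst]
    rw [← (hbip X Y).1, ← DaggerStruct.dag_comp, biprod.inl_desc]
  · simp only [biprod.lift_snd]
    rw [← (hbip X Y).2, ← DaggerStruct.dag_comp, biprod.inr_desc]

lemma dag_map' {X Y Z W : C} (f : X ⟶ Y) (g : Z ⟶ W) :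
    DaggerStruct.dag (biprod.map f g) = biprod.map (DaggerStruct.dag f) (DaggerStruct.dag g) := by
  apply biprod.hom_ext'
  · simp only [biprod.inl_map]
    rw [← dag_fst' hbip Y W, ← DaggerStruct.dag_comp, biprod.map_fst, DaggerStruct.dag_comp,
      dag_fst' hbip X Z]
  · simp only [biprod.inr_map]
    rw [← dag_snd' hbip Y W, ← DaggerStruct.dag_comp, biprod.map_snd, DaggerStruct.dag_comp,
      dag_snd' hbip X Z]

lemma dag_daggerAdd' {X Y : C} (f g : X ⟶ Y) :
    DaggerStruct.dag (daggerAdd f g) =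
      daggerAdd (DaggerStruct.dag f) (DaggerStruct.dag g) := by
  unfold daggerAdd
  simp only [DaggerStruct.dag_comp, dag_lift' hbip, dag_desc' hbip, dag_map' hbip,
    DaggerStruct.dag_id, Category.assoc]

omit hbip in
lemma negAux {X A B : C} (m : A ⟶ X) (g : B ⟶ X) (hm : IsDagMono m) (hg : IsDagMono g)
    (horth : m ≫ DaggerStruct.dag g = 0) (horth' : g ≫ DaggerStruct.dag m = 0)
    (hc : IsColimit (BinaryCofan.mk m g)) :
    daggerAdd (DaggerStruct.dag m ≫ m) (DaggerStruct.dag g ≫ g) = 𝟙 X := by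
  have hm' : m ≫ DaggerStruct.dag m = 𝟙 A := hm
  have hg' : g ≫ DaggerStruct.dag g = 𝟙 B := hg
  apply hc.hom_ext
  rintro ⟨⟨⟩⟩
  · show m ≫ _ = m ≫ _
    rw [comp_daggerAdd', ← Category.assoc, ← Category.assoc, hm', horth, Category.id_comp,
      zero_comp, daggerAdd_zero', Category.comp_id]
  · show g ≫ _ = g ≫ _
    rw [comp_daggerAdd', ← Category.assoc, ← Category.assoc, hg', horth', Category.id_comp,
      zero_comp, daggerAdd_comm', daggerAdd_zero', Category.comp_id]

end Helpers

/-- Under (H1)–(H4), the endomorphisms of a dagger simple object `I`, with the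
biproduct-induced addition, composition, identity and dagger, form a ∗-division
ring. -/
theorem stmt_9 {C : Type u} [Category.{v} C] [HasZeroObject C] [HasZeroMorphisms C]
    [HasBinaryBiproducts C] [DaggerStruct C]
    (hbip : ∀ X Y : C, DaggerStruct.dag (biprod.inl : X ⟶ X ⊞ Y) = biprod.fst ∧
        DaggerStruct.dag (biprod.inr : Y ⟶ X ⊞ Y) = biprod.snd)
    (H2 : ∀ (J : Type v) [Preorder J] [IsDirected J (· ≤ ·)] [Nonempty J] (F : J ⥤ C),
      (∀ (i j : J) (h : i ≤ j), IsDagMono (F.map (homOfLE h))) →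
      ∃ (X : C) (c : ∀ j : J, F.obj j ⟶ X),
        (∀ j, IsDagMono (c j)) ∧
        (∀ (i j : J) (h : i ≤ j), F.map (homOfLE h) ≫ c j = c i) ∧
        (∀ (Y : C) (d : ∀ j : J, F.obj j ⟶ Y), (∀ j, IsDagMono (d j)) →
          (∀ (i j : J) (h : i ≤ j), F.map (homOfLE h) ≫ d j = d i) →
          ∃! m : X ⟶ Y, IsDagMono m ∧ ∀ j, c j ≫ m = d j) ∧
        (∀ (Y : C) (f g : X ⟶ Y), (∀ j, c j ≫ f = c j ≫ g) → f = g))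
    (H3 : ∀ (A X : C) (f : A ⟶ X), IsDagMono f →
      ∃ (B : C) (g : B ⟶ X), IsDagMono g ∧ f ≫ DaggerStruct.dag g = 0 ∧
        Nonempty (IsColimit (BinaryCofan.mk f g)))
    (I : C) (hI : DagSimple I)
    (H4a : ∀ A : C, ¬ IsZero A → ∃ u : I ⟶ A, u ≠ 0)
    (H4b : ∀ (A : C) (u : I ⟶ A), u ≠ 0 → ∃ h : I ⟶ I, IsIso h ∧ IsDagMono (h ≫ u))
    :
    -- additive commutative monoid with additive inverses
    (∀ f g h : I ⟶ I, daggerAdd (daggerAdd f g) h = daggerAdd f (daggerAdd g h)) ∧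
    (∀ f g : I ⟶ I, daggerAdd f g = daggerAdd g f) ∧
    (∀ f : I ⟶ I, daggerAdd f 0 = f) ∧
    (∀ f : I ⟶ I, ∃ g : I ⟶ I, daggerAdd f g = 0) ∧
    -- distributivity of composition over addition
    (∀ f g h : I ⟶ I, daggerAdd f g ≫ h = daggerAdd (f ≫ h) (g ≫ h)) ∧
    (∀ f g h : I ⟶ I, f ≫ daggerAdd g h = daggerAdd (f ≫ g) (f ≫ h)) ∧
    -- division ring: 1 ≠ 0 and nonzero elements are invertible
    ((𝟙 I : I ⟶ I) ≠ 0) ∧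
    (∀ f : I ⟶ I, f ≠ 0 → ∃ g : I ⟶ I, f ≫ g = 𝟙 I ∧ g ≫ f = 𝟙 I) ∧
    -- the dagger is an involutive antiautomorphism
    (∀ f g : I ⟶ I, DaggerStruct.dag (daggerAdd f g) =
        daggerAdd (DaggerStruct.dag f) (DaggerStruct.dag g)) ∧
    (∀ f g : I ⟶ I, DaggerStruct.dag (f ≫ g) = DaggerStruct.dag g ≫ DaggerStruct.dag f) ∧
    (∀ f : I ⟶ I, DaggerStruct.dag (DaggerStruct.dag f) = f) := by
  have one_ne : (𝟙 I : I ⟶ I) ≠ 0 := by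
    intro h
    exact hI.1 ((IsZero.iff_id_eq_zero I).mpr h)
  refine ⟨fun f g h => daggerAdd_assoc' f g h, fun f g => daggerAdd_comm' f g,
    fun f => daggerAdd_zero' f, ?_, fun f g h => daggerAdd_comp' f g h,
    fun f g h => comp_daggerAdd' f g h, one_ne, ?_, fun f g => dag_daggerAdd' hbip f g,
    fun f g => DaggerStruct.dag_comp f g, fun f => DaggerStruct.dag_dag f⟩
  · -- additive inverses
    intro a
    have hwne : biprod.lift (𝟙 I) a ≠ 0 := by
      intro h0
      apply one_ne
      have := congrArg (fun x => x ≫ (biprod.fst : I ⊞ I ⟶ I)) h0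
      simpa using this
    obtain ⟨h, hiso, hdm⟩ := H4b _ (biprod.lift (𝟙 I) a) hwne
    haveI := hiso
    obtain ⟨B, g, hg, horth, ⟨hc⟩⟩ := H3 _ _ _ hdm
    have horth' : g ≫ DaggerStruct.dag (h ≫ biprod.lift (𝟙 I) a) = 0 := by
      have := congrArg DaggerStruct.dag horth
      rwa [DaggerStruct.dag_comp, DaggerStruct.dag_dag, dag_zero' hbip] at this
    have key := negAux (h ≫ biprod.lift (𝟙 I) a) g hdm hg horth horth' hc
    have hkey := congrArg
      (fun x => (biprod.inl : I ⟶ I ⊞ I) ≫ x ≫ (biprod.snd : I ⊞ I ⟶ I)) key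
    simp only [comp_daggerAdd', daggerAdd_comp', Category.assoc, biprod.inl_snd,
      Category.id_comp, Category.comp_id, comp_zero] at hkey
    have t1 : (biprod.inl : I ⟶ I ⊞ I) ≫ DaggerStruct.dag (h ≫ biprod.lift (𝟙 I) a) ≫
        h ≫ biprod.lift (𝟙 I) a ≫ biprod.snd = DaggerStruct.dag h ≫ h ≫ a := by
      rw [DaggerStruct.dag_comp, dag_lift' hbip, DaggerStruct.dag_id]
      simp
    have t2 : (biprod.inl : I ⟶ I ⊞ I) ≫ DaggerStruct.dag g ≫ g ≫ biprod.snd =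
        DaggerStruct.dag (g ≫ biprod.fst) ≫ g ≫ biprod.snd := by
      rw [DaggerStruct.dag_comp, dag_fst' hbip, Category.assoc]
    rw [t1, t2] at hkey
    haveI : IsIso (DaggerStruct.dag h) := by
      refine ⟨DaggerStruct.dag (inv h), ?_, ?_⟩
      · rw [← DaggerStruct.dag_comp, IsIso.inv_hom_id, DaggerStruct.dag_id]
      · rw [← DaggerStruct.dag_comp, IsIso.hom_inv_id, DaggerStruct.dag_id]
    refine ⟨inv (DaggerStruct.dag h ≫ h) ≫
      DaggerStruct.dag (g ≫ biprod.fst) ≫ g ≫ biprod.snd, ?_⟩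
    have hfin := congrArg (fun x => inv (DaggerStruct.dag h ≫ h) ≫ x) hkey
    simp only [comp_daggerAdd', comp_zero] at hfin
    have ha : inv (DaggerStruct.dag h ≫ h) ≫ DaggerStruct.dag h ≫ h ≫ a = a := by simp
    rwa [ha] at hfin
  · -- multiplicative inverses
    intro f hf
    obtain ⟨h, hiso, hdm⟩ := H4b I f hf
    haveI := hiso
    have hmne : h ≫ f ≠ 0 := by
      intro h0
      apply hf
      have := congrArg (fun x => inv h ≫ x) h0
      simpa using this
    have h2 := hI.2 (h ≫ f) hmne hdm
    refine ⟨DaggerStruct.dag (h ≫ f) ≫ h, ?_, ?_⟩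
    · have hfd : f ≫ DaggerStruct.dag (h ≫ f) = inv h := by
        apply IsIso.eq_inv_of_hom_inv_id
        rw [← Category.assoc]; exact hdm
      rw [← Category.assoc, hfd, IsIso.inv_hom_id]
    · rw [Category.assoc]; exact h2
end

section
/- Let C be a dagger category with zero object satisfying (H1)–(H4), I a dagger simple object, and F = C(I,I)^op the associated ∗-division ring. For each X ∈ C, the set V(X) = Hom(I,X) with pointwise biproduct addition, scalar action α·u = u ∘ α, and form ⟨u,v⟩ = v† ∘ u, is a Hermitian space over F: the form is sesquilinear, satisfies ⟨u,v⟩ = ⟨v,u⟩*, and is anisotropic (⟨u,u⟩ = 0 implies u = 0). -/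
universe v u

open CategoryTheory CategoryTheory.Limits

namespace Stmt11Aux

open DaggerStruct

section
variable {C : Type u} [Category.{v} C] [HasZeroMorphisms C] [HasBinaryBiproducts C]

lemma dadd_eq {X Y : C} (f g : X ⟶ Y) :
    daggerAdd f g = biprod.lift f g ≫ biprod.desc (𝟙 Y) (𝟙 Y) := by
  unfold daggerAdd
  rw [← Category.assoc]
  congr 1
  ext <;> simp

lemma dadd_eq' {X Y : C} (f g : X ⟶ Y) :
    daggerAdd f g = biprod.lift (𝟙 X) (𝟙 X) ≫ biprod.desc f g := by
  unfold daggerAdd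
  congr 1
  ext <;> simp

lemma comp_dadd {W X Y : C} (h : W ⟶ X) (f g : X ⟶ Y) :
    h ≫ daggerAdd f g = daggerAdd (h ≫ f) (h ≫ g) := by
  rw [dadd_eq, dadd_eq, ← Category.assoc]
  congr 1
  ext <;> simp

lemma dadd_comp {X Y Z : C} (f g : X ⟶ Y) (h : Y ⟶ Z) :
    daggerAdd f g ≫ h = daggerAdd (f ≫ h) (g ≫ h) := by
  rw [dadd_eq', dadd_eq', Category.assoc]
  congr 1
  ext <;> simp

lemma dadd_zero {X Y : C} (f : X ⟶ Y) : daggerAdd f 0 = f := by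
  rw [dadd_eq]
  have : biprod.lift f (0 : X ⟶ Y) = f ≫ biprod.inl := by ext <;> simp
  rw [this, Category.assoc, biprod.inl_desc, Category.comp_id]

lemma zero_dadd {X Y : C} (f : X ⟶ Y) : daggerAdd 0 f = f := by
  rw [dadd_eq]
  have : biprod.lift (0 : X ⟶ Y) f = f ≫ biprod.inr := by ext <;> simp
  rw [this, Category.assoc, biprod.inr_desc, Category.comp_id]

end

section
set_option linter.unusedSectionVars false
variable {C : Type u} [Category.{v} C] [HasZeroObject C] [HasZeroMorphisms C]
  [HasBinaryBiproducts C] [DaggerStruct C]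

lemma dag_zero {A B : C} : dag (0 : A ⟶ B) = 0 := by
  obtain ⟨Z, hZ⟩ := HasZeroObject.zero (C := C)
  have h1 : (0 : A ⟶ B) = (0 : A ⟶ Z) ≫ (0 : Z ⟶ B) := by simp
  rw [h1, dag_comp]
  have h2 : dag (0 : Z ⟶ B) = 0 := hZ.eq_zero_of_tgt _
  rw [h2, zero_comp]

variable (hbip : ∀ X Y : C, DaggerStruct.dag (biprod.inl : X ⟶ X ⊞ Y) = biprod.fst ∧
        DaggerStruct.dag (biprod.inr : Y ⟶ X ⊞ Y) = biprod.snd)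
include hbip

lemma dag_desc {X Y Z : C} (p : X ⟶ Z) (q : Y ⟶ Z) :
    dag (biprod.desc p q) = biprod.lift (dag p) (dag q) := by
  ext
  · rw [biprod.lift_fst, ← (hbip X Y).1, ← dag_comp, biprod.inl_desc]
  · rw [biprod.lift_snd, ← (hbip X Y).2, ← dag_comp, biprod.inr_desc]

lemma dag_lift {X Y Z : C} (p : X ⟶ Y) (q : X ⟶ Z) :
    dag (biprod.lift p q) = biprod.desc (dag p) (dag q) := by
  have := dag_desc hbip (dag p) (dag q)
  rw [dag_dag, dag_dag] at this
  rw [← this, dag_dag]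

lemma dag_dadd {X Y : C} (f g : X ⟶ Y) :
    dag (daggerAdd f g) = daggerAdd (dag f) (dag g) := by
  rw [dadd_eq, dadd_eq', dag_comp, dag_lift hbip, dag_desc hbip, dag_id]

end

end Stmt11Aux

open DaggerStruct Stmt11Aux

/-- Under (H1)–(H4), `V(X) = Hom(I,X)` with biproduct addition, scalar action
`α·u = u ∘ α` and form `⟨u,v⟩ = v† ∘ u` is a Hermitian space over `C(I,I)^op`:
the form is sesquilinear, Hermitian-symmetric and anisotropic. -/
theorem stmt_11 {C : Type u} [Category.{v} C] [HasZeroObject C] [HasZeroMorphisms C]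
    [HasBinaryBiproducts C] [DaggerStruct C]
    (hbip : ∀ X Y : C, DaggerStruct.dag (biprod.inl : X ⟶ X ⊞ Y) = biprod.fst ∧
        DaggerStruct.dag (biprod.inr : Y ⟶ X ⊞ Y) = biprod.snd)
    (H2 : ∀ (J : Type v) [Preorder J] [IsDirected J (· ≤ ·)] [Nonempty J] (F : J ⥤ C),
      (∀ (i j : J) (h : i ≤ j), IsDagMono (F.map (homOfLE h))) →
      ∃ (X : C) (c : ∀ j : J, F.obj j ⟶ X),
        (∀ j, IsDagMono (c j)) ∧
        (∀ (i j : J) (h : i ≤ j), F.map (homOfLE h) ≫ c j = c i) ∧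
        (∀ (Y : C) (d : ∀ j : J, F.obj j ⟶ Y), (∀ j, IsDagMono (d j)) →
          (∀ (i j : J) (h : i ≤ j), F.map (homOfLE h) ≫ d j = d i) →
          ∃! m : X ⟶ Y, IsDagMono m ∧ ∀ j, c j ≫ m = d j) ∧
        (∀ (Y : C) (f g : X ⟶ Y), (∀ j, c j ≫ f = c j ≫ g) → f = g))
    (H3 : ∀ (A X : C) (f : A ⟶ X), IsDagMono f →
      ∃ (B : C) (g : B ⟶ X), IsDagMono g ∧ f ≫ DaggerStruct.dag g = 0 ∧
        Nonempty (IsColimit (BinaryCofan.mk f g)))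
    (I : C) (hI : DagSimple I)
    (H4a : ∀ A : C, ¬ IsZero A → ∃ u : I ⟶ A, u ≠ 0)
    (H4b : ∀ (A : C) (u : I ⟶ A), u ≠ 0 → ∃ h : I ⟶ I, IsIso h ∧ IsDagMono (h ≫ u))
    :
    ∀ (X : C),
      -- additive inverses in V(X)
      (∀ u : I ⟶ X, ∃ w : I ⟶ X, daggerAdd u w = 0) ∧
      -- the form ⟨u,v⟩ = v† ∘ u is sesquilinear
      (∀ u u' v : I ⟶ X, daggerAdd u u' ≫ DaggerStruct.dag v =
          daggerAdd (u ≫ DaggerStruct.dag v) (u' ≫ DaggerStruct.dag v)) ∧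
      (∀ (α : I ⟶ I) (u v : I ⟶ X),
          (α ≫ u) ≫ DaggerStruct.dag v = α ≫ u ≫ DaggerStruct.dag v) ∧
      (∀ u v v' : I ⟶ X, u ≫ DaggerStruct.dag (daggerAdd v v') =
          daggerAdd (u ≫ DaggerStruct.dag v) (u ≫ DaggerStruct.dag v')) ∧
      (∀ (α : I ⟶ I) (u v : I ⟶ X),
          u ≫ DaggerStruct.dag (α ≫ v) = (u ≫ DaggerStruct.dag v) ≫ DaggerStruct.dag α) ∧
      -- Hermitian symmetry: ⟨u,v⟩ = ⟨v,u⟩*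
      (∀ u v : I ⟶ X, DaggerStruct.dag (u ≫ DaggerStruct.dag v) = v ≫ DaggerStruct.dag u) ∧
      -- anisotropy: ⟨u,u⟩ = 0 → u = 0
      (∀ u : I ⟶ X, u ≫ DaggerStruct.dag u = 0 → u = 0) := by
  classical
  intro X
  have hIne : (𝟙 I : I ⟶ I) ≠ 0 := fun h => hI.1 ((IsZero.iff_id_eq_zero I).2 h)
  -- Step 1: there is β : I ⟶ I with 1 + β = 0.
  have key : ∃ β : I ⟶ I, daggerAdd (𝟙 I) β = 0 := by
    set u0 : I ⟶ I ⊞ I := biprod.lift (𝟙 I) (𝟙 I) with hu0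
    have hu0ne : u0 ≠ 0 := by
      intro h
      apply hIne
      have := congrArg (fun t => t ≫ (biprod.fst : I ⊞ I ⟶ I)) h
      simpa [hu0] using this
    obtain ⟨a, haIso, ham⟩ := H4b _ u0 hu0ne
    have hm : a ≫ u0 = biprod.lift a a := by
      rw [hu0]; ext <;> simp
    set m : I ⟶ I ⊞ I := biprod.lift a a with hmdef
    rw [hm] at ham
    obtain ⟨B, g, hg, hmg, ⟨hc⟩⟩ := H3 I (I ⊞ I) m ham
    have hgm : g ≫ dag m = 0 := by
      have := congrArg dag hmg
      rwa [dag_comp, dag_dag, dag_zero] at this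
    have hsum : daggerAdd (dag m ≫ m) (dag g ≫ g) = 𝟙 (I ⊞ I) := by
      apply hc.hom_ext
      rintro ⟨⟨⟩⟩
      · show m ≫ _ = m ≫ _
        rw [comp_dadd, ← Category.assoc, ← Category.assoc, ham, hmg,
          Category.id_comp, zero_comp, dadd_zero, Category.comp_id]
      · show g ≫ _ = g ≫ _
        rw [comp_dadd, ← Category.assoc, ← Category.assoc, hg, hgm,
          Category.id_comp, zero_comp, zero_dadd, Category.comp_id]
    have hentry : daggerAdd (dag a ≫ a) ((dag (g ≫ biprod.fst)) ≫ (g ≫ biprod.snd)) = 0 := by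
      have h1 := congrArg (fun t => (biprod.inl : I ⟶ I ⊞ I) ≫ t ≫ (biprod.snd : I ⊞ I ⟶ I)) hsum
      simp only [Category.id_comp, biprod.inl_snd] at h1
      rw [dadd_comp, comp_dadd] at h1
      have e3 : (biprod.inl : I ⟶ I ⊞ I) ≫ dag g = dag (g ≫ biprod.fst) := by
        rw [dag_comp, ← (hbip I I).1, dag_dag]
      have e1 : (biprod.inl : I ⟶ I ⊞ I) ≫ (dag m ≫ m) ≫ biprod.snd = dag a ≫ a := by
        rw [hmdef, dag_lift hbip]
        simp
      have e2 : (biprod.inl : I ⟶ I ⊞ I) ≫ (dag g ≫ g) ≫ biprod.snd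
          = (dag (g ≫ biprod.fst)) ≫ (g ≫ biprod.snd) := by
        rw [← Category.assoc, ← Category.assoc, e3, Category.assoc]
      rw [e1, e2] at h1
      exact h1
    have hdagIso : IsIso (dag a) := by
      refine ⟨dag (inv a), ?_, ?_⟩
      · rw [← dag_comp, IsIso.inv_hom_id, dag_id]
      · rw [← dag_comp, IsIso.hom_inv_id, dag_id]
    have hcIso : IsIso (dag a ≫ a) := by
      exact IsIso.comp_isIso
    refine ⟨inv (dag a ≫ a) ≫ (dag (g ≫ biprod.fst)) ≫ (g ≫ biprod.snd), ?_⟩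
    have h5 := congrArg (fun t => inv (dag a ≫ a) ≫ t) hentry
    simp only [comp_zero] at h5
    rw [comp_dadd] at h5
    rw [IsIso.inv_hom_id] at h5
    exact h5
  obtain ⟨β, hβ⟩ := key
  refine ⟨?_, ?_, ?_, ?_, ?_, ?_, ?_⟩
  · -- additive inverses
    intro u
    refine ⟨β ≫ u, ?_⟩
    have : daggerAdd u (β ≫ u) = daggerAdd (𝟙 I ≫ u) (β ≫ u) := by
      rw [Category.id_comp]
    rw [this, ← dadd_comp, hβ, zero_comp]
  · intro u u' v
    exact dadd_comp u u' (dag v)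
  · intro α u v
    exact Category.assoc α u (dag v)
  · intro u v v'
    rw [dag_dadd hbip, comp_dadd]
  · intro α u v
    rw [dag_comp, ← Category.assoc]
  · intro u v
    rw [dag_comp, dag_dag]
  · intro u hu
    by_contra hne
    obtain ⟨h, hIso, hm⟩ := H4b X u hne
    apply hIne
    rw [← hm]
    rw [dag_comp, Category.assoc, ← Category.assoc u, hu, zero_comp, comp_zero]
end
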